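/- A vector Ψ : (ZMod d)⁴ → ℂ satisfies (U_{p,q} ⊗ U_{p,q} ⊗ conj(U_{p,q}) ⊗ conj(U_{p,q})) Ψ = Ψ for all p, q ∈ ZMod d if and only if Ψ lies in the linear span of the d² double-Bell vectors Φ_{r,s}, (r,s) ∈ ZMod d × ZMod d, defined by Φ_{r,s}(i,j,k,l) = (U_{r,s}ᴴ)_{i,l} · (U_{r,s})_{j,k}. In particular, the subspace of such invariant vectors has dimension d². -/

import Mathlib

open Matrix Kronecker BigOperators

/-- ω = exp(2πi/d). -/
noncomputable def omega (d : ℕ) : ℂ := Complex.exp (2 * Real.pi * Complex.I / d)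

/-- The Weyl–Heisenberg matrix `U_{p,q}`. -/
noncomputable def WH (d : ℕ) [NeZero d] (p q : ZMod d) : Matrix (ZMod d) (ZMod d) ℂ :=
  fun j k => if j = k + p then omega d ^ (q.val * k.val) else 0

/-- The double-Bell vector `Φ_{r,s}(i,j,k,l) = (U_{r,s}ᴴ)_{i,l}·(U_{r,s})_{j,k}`. -/
noncomputable def doubleBell (d : ℕ) [NeZero d] (rs : ZMod d × ZMod d) :
    ZMod d × ZMod d × ZMod d × ZMod d → ℂ :=
  fun x => (WH d rs.1 rs.2)ᴴ x.1 x.2.2.2 * WH d rs.1 rs.2 x.2.1 x.2.2.1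

/-!
`U_{p,q} ⊗ U_{p,q} ⊗ conj U_{p,q} ⊗ conj U_{p,q}` acts by the diagonal shift
`Ψ(i,j,k,l) ↦ Ψ(i-p, j-p, k-p, l-p)` followed by the phase `ω^{q(i+j-k-l)}`. Hence an invariant
vector is shift-invariant and supported on `i + j = k + l`, so it is determined by its values at
the points `(0, t + r, t, r)`, and the invariants have dimension at most `d²`. The `d²` double-Bell
vectors are invariant, and they are linearly independent: at those points `Φ_{r,s}` is
`δ_r ⊗ (t ↦ ω^{st})`, and the characters `t ↦ ω^{st}` are independent by Fourier inversion.
-/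

open ZMod (stdAddChar)

lemma stdAddChar_eq_one_iff {N : ℕ} [NeZero N] (a : ZMod N) : stdAddChar a = 1 ↔ a = 0 := by
  rw [← AddChar.map_zero_eq_one (ZMod.stdAddChar (N := N)), ZMod.injective_stdAddChar.eq_iff]

lemma eq_zero_of_forall_sum_stdAddChar_mul_smul_eq_zero {N : ℕ} [NeZero N] {E : Type*}
    [AddCommGroup E] [Module ℂ E] {c : ZMod N → E}
    (h : ∀ t, ∑ s, stdAddChar (s * t) • c s = 0) : c = 0 :=
  ZMod.dft.symm.map_eq_zero_iff.mp <| funext fun t => by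
    rw [ZMod.invDFT_apply, h, smul_zero, Pi.zero_apply]

section
variable {d : ℕ} [NeZero d]

lemma omega_pow_val_mul_val (q k : ZMod d) :
    omega d ^ (q.val * k.val) = stdAddChar (q * k) := by
  have hcast : ((q.val * k.val : ℕ) : ZMod d) = q * k := by
    push_cast [ZMod.natCast_zmod_val]; rfl
  rw [← hcast, ZMod.stdAddChar_apply, ZMod.toCircle_natCast, omega, ← Complex.exp_nat_mul]
  congr 1; ring

lemma WH_apply (p q j k : ZMod d) :
    WH d p q j k = if k = j - p then stdAddChar (q * k) else 0 := by
  simp only [WH, omega_pow_val_mul_val, eq_sub_iff_add_eq, eq_comm]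

lemma WH_map_conj_apply (p q j k : ZMod d) :
    (WH d p q).map (starRingEnd ℂ) j k = if k = j - p then stdAddChar (-(q * k)) else 0 := by
  rw [Matrix.map_apply, WH_apply]
  split_ifs <;> simp [AddChar.map_neg_eq_conj]

noncomputable def whTensor (d : ℕ) [NeZero d] (p q : ZMod d) :
    Matrix (ZMod d × ZMod d × ZMod d × ZMod d) (ZMod d × ZMod d × ZMod d × ZMod d) ℂ :=
  WH d p q ⊗ₖ (WH d p q ⊗ₖ
    ((WH d p q).map (starRingEnd ℂ) ⊗ₖ (WH d p q).map (starRingEnd ℂ)))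

lemma whTensor_mulVec_apply (p q : ZMod d) (Ψ : ZMod d × ZMod d × ZMod d × ZMod d → ℂ)
    (i j k l : ZMod d) :
    (whTensor d p q *ᵥ Ψ) (i, j, k, l) =
      stdAddChar (q * (i + j - k - l)) * Ψ (i - p, j - p, k - p, l - p) := by
  simp only [whTensor, mulVec, dotProduct, Fintype.sum_prod_type, kroneckerMap_apply,
    WH_apply, WH_map_conj_apply, ite_mul, mul_ite, zero_mul, mul_zero, Finset.sum_ite_eq',
    Finset.mem_univ, if_true, ← AddChar.map_add_eq_mul]
  congr 2; ring

variable (d) in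
noncomputable def whInvariants : Submodule ℂ (ZMod d × ZMod d × ZMod d × ZMod d → ℂ) :=
  ⨅ (p : ZMod d) (q : ZMod d), LinearMap.eqLocus (whTensor d p q).mulVecLin LinearMap.id

lemma mem_whInvariants {Ψ : ZMod d × ZMod d × ZMod d × ZMod d → ℂ} :
    Ψ ∈ whInvariants d ↔ ∀ p q, whTensor d p q *ᵥ Ψ = Ψ := by
  simp [whInvariants]

lemma apply_sub_of_mem_whInvariants {Ψ : ZMod d × ZMod d × ZMod d × ZMod d → ℂ}
    (hΨ : Ψ ∈ whInvariants d) (p i j k l : ZMod d) :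
    Ψ (i - p, j - p, k - p, l - p) = Ψ (i, j, k, l) := by
  simpa [whTensor_mulVec_apply] using congrFun (mem_whInvariants.mp hΨ p 0) (i, j, k, l)

lemma apply_eq_zero_of_mem_whInvariants {Ψ : ZMod d × ZMod d × ZMod d × ZMod d → ℂ}
    (hΨ : Ψ ∈ whInvariants d) {i j k l : ZMod d} (h : i + j - k - l ≠ 0) :
    Ψ (i, j, k, l) = 0 := by
  have := congrFun (mem_whInvariants.mp hΨ 0 1) (i, j, k, l)
  simp only [whTensor_mulVec_apply, one_mul, sub_zero] at this
  exact (mul_left_eq_self₀.mp this).resolve_left (mt (stdAddChar_eq_one_iff _).mp h)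

variable (d) in
noncomputable def bellCoordinates :
    (ZMod d × ZMod d × ZMod d × ZMod d → ℂ) →ₗ[ℂ] (ZMod d × ZMod d → ℂ) :=
  LinearMap.funLeft ℂ ℂ fun x => (0, x.2 + x.1, x.2, x.1)

lemma eq_zero_of_mem_whInvariants_of_bellCoordinates_eq_zero
    {Ψ : ZMod d × ZMod d × ZMod d × ZMod d → ℂ}
    (hΨ : Ψ ∈ whInvariants d) (h : bellCoordinates d Ψ = 0) : Ψ = 0 := by
  ext ⟨i, j, k, l⟩
  rw [← apply_sub_of_mem_whInvariants hΨ i, sub_self]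
  by_cases hjkl : j - i = (k - i) + (l - i)
  · rw [hjkl]; exact congrFun h (l - i, k - i)
  · exact apply_eq_zero_of_mem_whInvariants hΨ (by contrapose! hjkl; linear_combination hjkl)

lemma finrank_whInvariants_le : Module.finrank ℂ (whInvariants d) ≤ d ^ 2 := by
  have hinj : Function.Injective ((bellCoordinates d).domRestrict (whInvariants d)) := by
    rw [← LinearMap.ker_eq_bot, LinearMap.ker_eq_bot']
    intro Ψ hΨ
    exact Subtype.ext (eq_zero_of_mem_whInvariants_of_bellCoordinates_eq_zero Ψ.2 hΨ)
  simpa [Module.finrank_fintype_fun_eq_card, sq] using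
    LinearMap.finrank_le_finrank_of_injective hinj

lemma doubleBell_apply (r s i j k l : ZMod d) :
    doubleBell d (r, s) (i, j, k, l) =
      if l = i + r ∧ j = k + r then stdAddChar (s * (k - i)) else 0 := by
  simp only [doubleBell, conjTranspose_apply, WH_apply, eq_sub_iff_add_eq, eq_comm (a := i + r),
    eq_comm (a := k + r), apply_ite star, star_zero, ite_zero_mul_ite_zero, Complex.star_def,
    ← AddChar.map_neg_eq_conj, ← AddChar.map_add_eq_mul]
  congr 3; ring

lemma doubleBell_mem_whInvariants (rs : ZMod d × ZMod d) : doubleBell d rs ∈ whInvariants d := by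
  obtain ⟨r, s⟩ := rs
  refine mem_whInvariants.mpr fun p q => ?_
  ext ⟨i, j, k, l⟩
  simp only [whTensor_mulVec_apply, doubleBell_apply, sub_left_inj, sub_sub_sub_cancel_right,
    sub_add_eq_add_sub]
  split_ifs with h
  · obtain ⟨rfl, rfl⟩ := h
    rw [show i + (k + r) - k - (i + r) = 0 by ring, mul_zero, AddChar.map_zero_eq_one, one_mul]
  · exact mul_zero _

lemma bellCoordinates_doubleBell (r s r' t : ZMod d) :
    bellCoordinates d (doubleBell d (r, s)) (r', t) = if r' = r then stdAddChar (s * t) else 0 := by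
  simp [bellCoordinates, doubleBell_apply]

lemma linearIndependent_doubleBell : LinearIndependent ℂ (doubleBell d) := by
  rw [Fintype.linearIndependent_iff]
  intro g hg ⟨r, s⟩
  refine congrFun (eq_zero_of_forall_sum_stdAddChar_mul_smul_eq_zero (c := fun s => g (r, s))
    fun t => ?_) s
  have := congrFun (congrArg (bellCoordinates d) hg) (r, t)
  simpa [Fintype.sum_prod_type, bellCoordinates_doubleBell, mul_comm] using this

lemma finrank_span_doubleBell :
    Module.finrank ℂ (Submodule.span ℂ (Set.range (doubleBell d))) = d ^ 2 := by
  rw [finrank_span_eq_card linearIndependent_doubleBell, Fintype.card_prod, ZMod.card, sq]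

lemma span_doubleBell_eq_whInvariants :
    Submodule.span ℂ (Set.range (doubleBell d)) = whInvariants d := by
  refine Submodule.eq_of_le_of_finrank_le
    (Submodule.span_le.mpr (Set.range_subset_iff.mpr doubleBell_mem_whInvariants)) ?_
  rw [finrank_span_doubleBell]
  exact finrank_whInvariants_le

end

/-- A vector of `(ℂ^d)^⊗4` is invariant under `U_{p,q} ⊗ U_{p,q} ⊗ conj(U_{p,q}) ⊗ conj(U_{p,q})`
for all `p,q` iff it lies in the span of the d² double-Bell vectors; in particular the
invariant subspace has dimension d². -/
theorem invariant_vectors_eq_doubleBell_span (d : ℕ) [NeZero d] :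
    (∀ Ψ : ZMod d × ZMod d × ZMod d × ZMod d → ℂ,
      (∀ p q : ZMod d,
        (WH d p q ⊗ₖ (WH d p q ⊗ₖ ((WH d p q).map (starRingEnd ℂ) ⊗ₖ
          (WH d p q).map (starRingEnd ℂ)))).mulVec Ψ = Ψ) ↔
      Ψ ∈ Submodule.span ℂ (Set.range (doubleBell d))) ∧
    Module.finrank ℂ (Submodule.span ℂ (Set.range (doubleBell d))) = d ^ 2 := by
  refine ⟨fun Ψ => ?_, finrank_span_doubleBell⟩
  rw [span_doubleBell_eq_whInvariants, mem_whInvariants]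
  rfl
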